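/- arXiv:1511.09320 — 7 statements merged into one kernel-verified Lean document; each statement's English description precedes it below -/
import Mathlib

section
/- Let k be an algebraically closed field of characteristic zero, L a field extension of k, and G a finite abelian group acting faithfully on L by k-algebra automorphisms. Let g ∈ G have order n ≥ 2 and let χ : G → kˣ be a character such that χ(g) has order n. Suppose x : L → L is a k-linear map satisfying: (i) x(a·b) = g(a)·x(b) + x(a)·b for all a, b ∈ L; (ii) h(x(a)) = χ(h)·x(h(a)) for all h ∈ G and a ∈ L; and (iii) the n-fold composite x ∘ ⋯ ∘ x (n times) is the zero map. Then there exists w ∈ L with h(w) = χ(h)·w for all h ∈ G such that x(a) = w·(a − g(a)) for all a ∈ L. -/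
/-- Forward direction of Theorem 3.3: a skew-derivation action extending a faithful
abelian group action on a field is of the form `x(a) = w * (a - g a)` for a
`χ`-eigenvector `w`. -/
theorem stmt_0 (k L : Type*) [Field k] [IsAlgClosed k] [CharZero k]
    [Field L] [Algebra k L]
    (G : Type*) [CommGroup G] [Fintype G]
    (ρ : G →* (L ≃ₐ[k] L)) (hρ : Function.Injective ρ)
    (g : G) (n : ℕ) (hn : 2 ≤ n) (hg : orderOf g = n)
    (χ : G →* kˣ) (hχ : orderOf (χ g) = n)
    (x : L →ₗ[k] L)
    (hskew : ∀ a b : L, x (a * b) = ρ g a * x b + x a * b)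
    (hcomm : ∀ (h : G) (a : L), ρ h (x a) = (χ h : k) • x (ρ h a))
    (hnil : x ^ n = 0) :
    ∃ w : L, (∀ h : G, ρ h w = (χ h : k) • w) ∧ ∀ a : L, x a = w * (a - ρ g a) := by
  -- g ≠ 1, so there exists b with ρ g b ≠ b
  have hg1 : g ≠ 1 := by
    intro h
    rw [h, orderOf_one] at hg
    omega
  have hρg : ρ g ≠ 1 := by
    intro h
    exact hg1 (hρ (by rw [h, map_one]))
  obtain ⟨b, hb⟩ : ∃ b : L, ρ g b ≠ b := by
    by_contra hc
    push_neg at hc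
    exact hρg (AlgEquiv.ext fun a => hc a)
  have hd : b - ρ g b ≠ 0 := sub_ne_zero.mpr fun h => hb h.symm
  set w : L := x b / (b - ρ g b) with hw
  have key : ∀ a : L, x a = w * (a - ρ g a) := by
    intro a
    have h1 := hskew a b
    have h2 := hskew b a
    rw [mul_comm a b] at h1
    have h3 : x a * (b - ρ g b) = x b * (a - ρ g a) := by
      have h4 := h1.symm.trans h2
      ring_nf
      ring_nf at h4
      linear_combination h4
    rw [hw, div_mul_eq_mul_div, eq_div_iff hd]
    linear_combination h3
  refine ⟨w, ?_, key⟩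
  intro h
  -- commuting of ρ g and ρ h
  have hcommgh : ∀ a : L, ρ g (ρ h a) = ρ h (ρ g a) := by
    intro a
    have : ρ (g * h) a = ρ (h * g) a := by rw [mul_comm]
    simpa [map_mul] using this
  have e1 := hcomm h b
  have e2 : x (ρ h b) = w * (ρ h b - ρ h (ρ g b)) := by
    rw [key (ρ h b), hcommgh]
  have hld : ρ h (b - ρ g b) ≠ 0 := by
    intro ht
    exact hd ((ρ h).injective (ht.trans (map_zero (ρ h)).symm))
  have e3 : ρ h w * ρ h (b - ρ g b) = ((χ h : k) • w) * ρ h (b - ρ g b) := by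
    calc ρ h w * ρ h (b - ρ g b) = ρ h (w * (b - ρ g b)) := (map_mul _ _ _).symm
      _ = ρ h (x b) := by rw [← key b]
      _ = (χ h : k) • x (ρ h b) := e1
      _ = (χ h : k) • (w * (ρ h b - ρ h (ρ g b))) := by rw [e2]
      _ = ((χ h : k) • w) * (ρ h b - ρ h (ρ g b)) := (smul_mul_assoc _ _ _).symm
      _ = ((χ h : k) • w) * ρ h (b - ρ g b) := by rw [map_sub]
  exact mul_right_cancel₀ hld e3
end

section
/- Let k be a field, L a field extension of k, and G a finite abelian group acting on L by k-algebra automorphisms. Let g ∈ G have order n ≥ 2 and let χ : G → kˣ be a character such that χ(g) is a primitive n-th root of unity in k. Let w ∈ L satisfy h(w) = χ(h)·w for all h ∈ G, and define x : L → L by x(a) = w·(a − g(a)). Then: (i) x is k-linear and x(a·b) = g(a)·x(b) + x(a)·b for all a, b ∈ L; (ii) h(x(a)) = χ(h)·x(h(a)) for all h ∈ G and a ∈ L; and (iii) the n-fold composite x ∘ ⋯ ∘ x (n times) is the zero map. -/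
/-!
Properties (i) and (ii) are direct computations. For nilpotency, `σ (w ^ m) = ζ ^ m w ^ m` gives
`x (w ^ m b) = w ^ (m + 1) (1 - ζ ^ m σ) b`, so the `m`-fold iterate of `x = w (1 - σ)` is
`w ^ m ∏_{i < m} (1 - ζ ^ i σ)`. For `ζ` a primitive `n`-th root of unity this product is
`1 - σ ^ n` when `m = n`, which vanishes because `g ^ n = 1`.
-/

open Polynomial Finset

theorem prod_one_sub_C_pow_mul_X {K : Type*} [CommRing K] [IsDomain K] {ζ : K} {n : ℕ}
    (hζ : IsPrimitiveRoot ζ n) (hn : 0 < n) :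
    ∏ i ∈ range n, (1 - C (ζ ^ i) * X : K[X]) = 1 - X ^ n := by
  -- factor `Y ^ n - X ^ n` over `K[X]` and evaluate at `Y = 1`
  have h := X_pow_sub_C_eq_prod (hζ.map_of_injective C_injective) hn (rfl : (X : K[X]) ^ n = X ^ n)
  simpa [eval_prod, mul_comm] using (congrArg (eval 1) h).symm

section MulOneSub

variable {k L : Type*} [CommRing k] [CommRing L] [Algebra k L]

def mulOneSub (w : L) (σ : L →ₐ[k] L) (a : L) : L := w * (a - σ a)

variable (w : L) (σ : L →ₐ[k] L)

theorem mulOneSub_smul (c : k) (a : L) : mulOneSub w σ (c • a) = c • mulOneSub w σ a := by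
  simp only [mulOneSub, map_smul, ← smul_sub, mul_smul_comm]

theorem mulOneSub_add (a b : L) : mulOneSub w σ (a + b) = mulOneSub w σ a + mulOneSub w σ b := by
  simp only [mulOneSub, map_add]
  ring

theorem mulOneSub_mul (a b : L) :
    mulOneSub w σ (a * b) = σ a * mulOneSub w σ b + mulOneSub w σ a * b := by
  simp only [mulOneSub, map_mul]
  ring

variable {w σ}

theorem map_mulOneSub {τ : L →ₐ[k] L} {c : k} (hτσ : ∀ a, τ (σ a) = σ (τ a)) (hw : τ w = c • w)
    (a : L) : τ (mulOneSub w σ a) = c • mulOneSub w σ (τ a) := by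
  simp only [mulOneSub, map_mul, map_sub, hτσ, hw, smul_mul_assoc]

theorem mulOneSub_pow_mul {ζ : k} (hw : σ w = ζ • w) (m : ℕ) (b : L) :
    mulOneSub w σ (w ^ m * b) = w ^ (m + 1) * (b - ζ ^ m • σ b) := by
  simp only [mulOneSub, map_mul, map_pow, hw, Algebra.smul_def]
  ring

theorem iterate_mulOneSub {ζ : k} (hw : σ w = ζ • w) (m : ℕ) (a : L) :
    (mulOneSub w σ)^[m] a =
      w ^ m * aeval σ.toLinearMap (∏ i ∈ range m, (1 - C (ζ ^ i) * X)) a := by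
  induction m with
  | zero => simp
  | succ m ih =>
    rw [Function.iterate_succ_apply', ih, mulOneSub_pow_mul hw, prod_range_succ_comm, map_mul]
    simp only [map_sub, map_one, map_mul, aeval_C, aeval_X, Module.End.mul_apply,
      LinearMap.sub_apply, Module.End.one_apply, Module.algebraMap_end_apply,
      AlgHom.toLinearMap_apply]

theorem iterate_mulOneSub_eq_zero [IsDomain k] {ζ : k} {n : ℕ} (hζ : IsPrimitiveRoot ζ n)
    (hn : 0 < n) (hσ : σ ^ n = 1) (hw : σ w = ζ • w) (a : L) : (mulOneSub w σ)^[n] a = 0 := by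
  rw [iterate_mulOneSub hw, prod_one_sub_C_pow_mul_X hζ hn]
  simp [Module.End.pow_apply, ← AlgHom.coe_pow, hσ]

end MulOneSub

theorem stmt_1_general (k L : Type*) [Field k] [Field L] [Algebra k L]
    (G : Type*) [CommGroup G]
    (ρ : G →* (L ≃ₐ[k] L))
    (g : G) (n : ℕ) (hn : 2 ≤ n) (hg : orderOf g = n)
    (χ : G →* kˣ) (hχ : IsPrimitiveRoot ((χ g : kˣ) : k) n)
    (w : L) (hw : ∀ h : G, ρ h w = (χ h : k) • w)
    (x : L → L) (hx : ∀ a : L, x a = w * (a - ρ g a)) :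
    (∀ (c : k) (a : L), x (c • a) = c • x a) ∧
    (∀ a b : L, x (a + b) = x a + x b) ∧
    (∀ a b : L, x (a * b) = ρ g a * x b + x a * b) ∧
    (∀ (h : G) (a : L), ρ h (x a) = (χ h : k) • x (ρ h a)) ∧
    (∀ a : L, x^[n] a = 0) := by
  obtain rfl : x = mulOneSub w (ρ g : L →ₐ[k] L) := funext hx
  have hρ_comm (h : G) (a : L) : ρ h (ρ g a) = ρ g (ρ h a) := by
    rw [← AlgEquiv.mul_apply, ← map_mul, mul_comm, map_mul, AlgEquiv.mul_apply]
  have hρg_pow : (ρ g : L →ₐ[k] L) ^ n = 1 := by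
    ext a
    rw [AlgHom.coe_pow, AlgEquiv.coe_toAlgHom, ← AlgEquiv.coe_pow, ← map_pow, ← hg,
      pow_orderOf_eq_one, map_one, AlgEquiv.one_apply, AlgHom.one_apply]
  exact ⟨mulOneSub_smul _ _, mulOneSub_add _ _, mulOneSub_mul _ _,
    fun h => map_mulOneSub (τ := (ρ h : L →ₐ[k] L)) (hρ_comm h) (hw h),
    iterate_mulOneSub_eq_zero hχ (by omega) hρg_pow (hw g)⟩

/-- Converse direction of Theorem 3.3: for `w` a `χ`-eigenvector, the operator
`x(a) = w * (a - g a)` is a k-linear (g,1)-skew derivation, commutes with `G`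
via `χ`, and is nilpotent of order `n`. -/
theorem stmt_1 (k L : Type*) [Field k] [Field L] [Algebra k L]
    (G : Type*) [CommGroup G] [Fintype G]
    (ρ : G →* (L ≃ₐ[k] L))
    (g : G) (n : ℕ) (hn : 2 ≤ n) (hg : orderOf g = n)
    (χ : G →* kˣ) (hχ : IsPrimitiveRoot ((χ g : kˣ) : k) n)
    (w : L) (hw : ∀ h : G, ρ h w = (χ h : k) • w)
    (x : L → L) (hx : ∀ a : L, x a = w * (a - ρ g a)) :
    (∀ (c : k) (a : L), x (c • a) = c • x a) ∧
    (∀ a b : L, x (a + b) = x a + x b) ∧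
    (∀ a b : L, x (a * b) = ρ g a * x b + x a * b) ∧
    (∀ (h : G) (a : L), ρ h (x a) = (χ h : k) • x (ρ h a)) ∧
    (∀ a : L, x^[n] a = 0) :=
  stmt_1_general k L G ρ g n hn hg χ hχ w hw x hx
end

section
/- Let k be a field, L a field extension of k, and g₁, g₂ commuting k-algebra automorphisms of L. Let q₁₂, q₂₁ ∈ kˣ with q₁₂·q₂₁ = 1, let λ ∈ k, and let w₁, w₂ ∈ L satisfy g₁(w₂) = q₁₂·w₂ and g₂(w₁) = q₂₁·w₁. Define X_i : L → L by X_i(a) = w_i·(a − g_i(a)) for i = 1, 2. Then for all a ∈ L: X₁(X₂(a)) − q₁₂·X₂(X₁(a)) − λ·(a − g₁(g₂(a))) = (w₁·w₂·(1 − q₁₂) − λ)·(a − g₁(g₂(a))). In particular (taking λ = 0), X₁X₂ − q₁₂·X₂X₁ equals multiplication by w₁w₂(1 − q₁₂) composed with the operator a ↦ a − g₁(g₂(a)). -/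
/-- Operator computation for quantum linear spaces (type A₁×A₁):
`X₁X₂ − q₁₂X₂X₁ − λ(1 − g₁g₂)` acts by `(w₁w₂(1−q₁₂) − λ)(1 − g₁g₂)`. -/
theorem stmt_8 (k L : Type*) [Field k] [Field L] [Algebra k L]
    (g₁ g₂ : L ≃ₐ[k] L) (hcomm : ∀ a : L, g₁ (g₂ a) = g₂ (g₁ a))
    (q₁₂ q₂₁ : k) (hq : q₁₂ * q₂₁ = 1) (lam : k)
    (w₁ w₂ : L)
    (h₁₂ : g₁ w₂ = algebraMap k L q₁₂ * w₂)
    (h₂₁ : g₂ w₁ = algebraMap k L q₂₁ * w₁)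
    (X₁ X₂ : L → L)
    (hX₁ : ∀ a : L, X₁ a = w₁ * (a - g₁ a))
    (hX₂ : ∀ a : L, X₂ a = w₂ * (a - g₂ a)) :
    (∀ a : L,
      X₁ (X₂ a) - algebraMap k L q₁₂ * X₂ (X₁ a)
          - algebraMap k L lam * (a - g₁ (g₂ a)) =
        (w₁ * w₂ * (1 - algebraMap k L q₁₂) - algebraMap k L lam) * (a - g₁ (g₂ a))) ∧
    (∀ a : L,
      X₁ (X₂ a) - algebraMap k L q₁₂ * X₂ (X₁ a) =
        w₁ * w₂ * (1 - algebraMap k L q₁₂) * (a - g₁ (g₂ a))) := by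
  have hqL : algebraMap k L q₁₂ * algebraMap k L q₂₁ = 1 := by
    rw [← map_mul, hq, map_one]
  have key : ∀ a : L,
      X₁ (X₂ a) - algebraMap k L q₁₂ * X₂ (X₁ a) =
        w₁ * w₂ * (1 - algebraMap k L q₁₂) * (a - g₁ (g₂ a)) := by
    intro a
    rw [hX₂ a, hX₁ a, hX₁ (w₂ * (a - g₂ a)), hX₂ (w₁ * (a - g₁ a))]
    rw [map_mul, map_mul, map_sub, map_sub, h₁₂, h₂₁, hcomm a]
    linear_combination w₁ * w₂ * (g₂ a - g₂ (g₁ a)) * hqL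
  refine ⟨fun a => ?_, key⟩
  rw [key a]; ring
end

section
/- Let k be a field, L a field extension of k, and g₁, g₂ commuting k-algebra automorphisms of L. Let q₁₁, q₁₂, q₂₁ ∈ kˣ and let w₁, w₂ ∈ L satisfy g₁(w₁) = q₁₁·w₁, g₁(w₂) = q₁₂·w₂, and g₂(w₁) = q₂₁·w₁. Define X_i : L → L by X_i(a) = w_i·(a − g_i(a)). Then, as k-linear operators on L, X₁²X₂ − (q₁₁q₁₂ + q₁₂)·X₁X₂X₁ + q₁₁q₁₂²·X₂X₁² equals the map a ↦ w₁²w₂·[ (q₁₁q₁₂q₂₁ − q₁₁q₁₂)(q₁₂ − q₁₁q₁₂q₂₁)·g₁(g₁(g₂(a))) + q₁₂(q₂₁ − 1)(q₁₁ + 1)(q₁₁q₁₂q₂₁ − 1)·g₁(g₂(a)) + (q₁₁q₁₂q₂₁ − 1)(1 − q₁₂q₂₁)·g₂(a) + (q₁₁q₁₂ − 1)(q₁₂ − 1)·a ]. -/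
/-- Equation (5.4): the quantum Serre relation
`X₁²X₂ − (q₁₁q₁₂+q₁₂)X₁X₂X₁ + q₁₁q₁₂²X₂X₁²` acts by `w₁²w₂ · Q₁₂(g₁,g₂)`. -/
theorem stmt_9 (k L : Type*) [Field k] [Field L] [Algebra k L]
    (g₁ g₂ : L ≃ₐ[k] L) (hcomm : ∀ a : L, g₁ (g₂ a) = g₂ (g₁ a))
    (q₁₁ q₁₂ q₂₁ : k) (hq₁₁ : q₁₁ ≠ 0) (hq₁₂ : q₁₂ ≠ 0) (hq₂₁ : q₂₁ ≠ 0)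
    (w₁ w₂ : L)
    (h₁₁ : g₁ w₁ = algebraMap k L q₁₁ * w₁)
    (h₁₂ : g₁ w₂ = algebraMap k L q₁₂ * w₂)
    (h₂₁ : g₂ w₁ = algebraMap k L q₂₁ * w₁)
    (X₁ X₂ : L → L)
    (hX₁ : ∀ a : L, X₁ a = w₁ * (a - g₁ a))
    (hX₂ : ∀ a : L, X₂ a = w₂ * (a - g₂ a)) :
    ∀ a : L,
      X₁ (X₁ (X₂ a)) - algebraMap k L (q₁₁ * q₁₂ + q₁₂) * X₁ (X₂ (X₁ a))
          + algebraMap k L (q₁₁ * q₁₂ ^ 2) * X₂ (X₁ (X₁ a)) =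
      w₁ ^ 2 * w₂ *
        (algebraMap k L ((q₁₁ * q₁₂ * q₂₁ - q₁₁ * q₁₂) * (q₁₂ - q₁₁ * q₁₂ * q₂₁))
            * g₁ (g₁ (g₂ a))
          + algebraMap k L (q₁₂ * (q₂₁ - 1) * (q₁₁ + 1) * (q₁₁ * q₁₂ * q₂₁ - 1))
            * g₁ (g₂ a)
          + algebraMap k L ((q₁₁ * q₁₂ * q₂₁ - 1) * (1 - q₁₂ * q₂₁)) * g₂ a
          + algebraMap k L ((q₁₁ * q₁₂ - 1) * (q₁₂ - 1)) * a) := by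
  intro a
  simp only [hX₁, hX₂, map_mul, map_sub, h₁₁, h₁₂, h₂₁, map_add, map_pow,
    mul_sub, sub_mul, AlgEquiv.commutes]
  simp only [hcomm]
  push_cast [map_mul, map_add, map_sub, map_one, map_pow]
  ring
end

section
/- Let k be a field, L a field extension of k, and g₁, g₂ commuting k-algebra automorphisms of L. Let q₁₁, q₁₂, q₂₁ ∈ kˣ with q₁₁·q₁₂·q₂₁ = 1, and let w₁, w₂ ∈ L satisfy g₁(w₁) = q₁₁·w₁, g₁(w₂) = q₁₂·w₂, and g₂(w₁) = q₂₁·w₁. Define X_i : L → L by X_i(a) = w_i·(a − g_i(a)). Then, as k-linear operators on L, X₁²X₂ − (q₁₁q₁₂ + q₁₂)·X₁X₂X₁ + q₁₁q₁₂²·X₂X₁² equals the map a ↦ (1 − q₁₁q₁₂)(q₁₂ − 1)·w₁²w₂·(g₁(g₁(g₂(a))) − a). -/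
/-!
Write `X_i = w_i (1 - g_i)`. Pushing a semi-invariant `v` (with `g v = c v`) past `1 - g` turns
it into `1 - c g`, so each cubic word is `w₁² w₂` times an element of the commutative algebra
`k[g₁, g₂]`:
`X₁²X₂ = w₁²w₂ (1 - q₁₁q₁₂ g₁)(1 - q₁₂ g₁)(1 - g₂)`,
`X₁X₂X₁ = w₁²w₂ (1 - q₁₁q₁₂ g₁)(1 - q₂₁ g₂)(1 - g₁)`,
`X₂X₁² = w₁²w₂ (1 - q₂₁² g₂)(1 - q₁₁ g₁)(1 - g₁)`.
Once `q₂₁ = (q₁₁q₁₂)⁻¹`, the Serre combination of these three polynomials collapses to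
`(1 - q₁₁q₁₂)(q₁₂ - 1)(g₁²g₂ - 1)`.
-/

section
variable {k L F : Type*} [CommSemiring k] [FunLike F L L] {g : F}

theorem map_mul_of_map_eq_algebraMap_mul [CommSemiring L] [Algebra k L] [MulHomClass F L L]
    {v v' : L} {c c' : k} (hv : g v = algebraMap k L c * v) (hv' : g v' = algebraMap k L c' * v') :
    g (v * v') = algebraMap k L (c * c') * (v * v') := by
  rw [map_mul, hv, hv', map_mul]
  ring

theorem apply_mul_of_map_eq_algebraMap_mul [CommRing L] [Algebra k L] [MulHomClass F L L]
    {X : L → L} {w v : L} {c : k} (hX : ∀ a, X a = w * (a - g a)) (hv : g v = algebraMap k L c * v)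
    (b : L) : X (v * b) = v * w * (b - algebraMap k L c * g b) := by
  rw [hX, map_mul, hv]
  ring

end

/-- The key simplification in the proof of Theorem 5.5: if `q₁₁q₁₂q₂₁ = 1`, the
quantum Serre relation acts by `(1−q₁₁q₁₂)(q₁₂−1)·w₁²w₂·(g₁²g₂ − 1)`. -/
theorem stmt_10 (k L : Type*) [Field k] [Field L] [Algebra k L]
    (g₁ g₂ : L ≃ₐ[k] L) (hcomm : ∀ a : L, g₁ (g₂ a) = g₂ (g₁ a))
    (q₁₁ q₁₂ q₂₁ : k) (hq : q₁₁ * q₁₂ * q₂₁ = 1)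
    (w₁ w₂ : L)
    (h₁₁ : g₁ w₁ = algebraMap k L q₁₁ * w₁)
    (h₁₂ : g₁ w₂ = algebraMap k L q₁₂ * w₂)
    (h₂₁ : g₂ w₁ = algebraMap k L q₂₁ * w₁)
    (X₁ X₂ : L → L)
    (hX₁ : ∀ a : L, X₁ a = w₁ * (a - g₁ a))
    (hX₂ : ∀ a : L, X₂ a = w₂ * (a - g₂ a)) :
    ∀ a : L,
      X₁ (X₁ (X₂ a)) - algebraMap k L (q₁₁ * q₁₂ + q₁₂) * X₁ (X₂ (X₁ a))
          + algebraMap k L (q₁₁ * q₁₂ ^ 2) * X₂ (X₁ (X₁ a)) =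
      algebraMap k L ((1 - q₁₁ * q₁₂) * (q₁₂ - 1)) * (w₁ ^ 2 * w₂)
        * (g₁ (g₁ (g₂ a)) - a) := by
  intro a
  rw [hX₂, apply_mul_of_map_eq_algebraMap_mul hX₁ h₁₂,
    apply_mul_of_map_eq_algebraMap_mul hX₁ (map_mul_of_map_eq_algebraMap_mul h₁₂ h₁₁),
    hX₁ a, apply_mul_of_map_eq_algebraMap_mul hX₂ h₂₁,
    apply_mul_of_map_eq_algebraMap_mul hX₁ (map_mul_of_map_eq_algebraMap_mul h₁₁ h₁₂),
    apply_mul_of_map_eq_algebraMap_mul hX₁ h₁₁,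
    apply_mul_of_map_eq_algebraMap_mul hX₂ (map_mul_of_map_eq_algebraMap_mul h₂₁ h₂₁)]
  have hqL : algebraMap k L q₁₁ * algebraMap k L q₁₂ * algebraMap k L q₂₁ = 1 := by
    rw [← map_mul, ← map_mul, hq, map_one]
  simp only [map_sub, map_mul, map_add, map_one, map_pow, AlgEquiv.commutes, hcomm]
  set A := algebraMap k L q₁₁
  set B := algebraMap k L q₁₂
  set C := algebraMap k L q₂₁
  -- In `k[g₁, g₂]` the two sides differ by
  -- `(q₁₁q₁₂q₂₁ - 1) g₂ (1 - g₁) ((1 - q₁₂q₂₁) + (1 - q₁₁q₁₂ - q₁₂ + q₁₁q₁₂q₂₁) g₁)`.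
  linear_combination w₁ ^ 2 * w₂ * ((1 - B * C) * (g₂ a - g₂ (g₁ a))
    + (1 - A * B - B + A * B * C) * (g₂ (g₁ a) - g₂ (g₁ (g₁ a)))) * hqL
end

section
/- Let k be a field, L a field extension of k, K a k-algebra automorphism of L, and q ∈ kˣ. Let w₁, w₂ ∈ L satisfy K(w₁) = q²·w₁ and K(w₂) = q⁻²·w₂, and define X_i : L → L by X_i(a) = w_i·(a − K(a)) for i = 1, 2. Then for all a ∈ L: q²·X₁(X₂(a)) − X₂(X₁(a)) = (q² − 1)·w₁w₂·(a − K(K(a))). In particular, if q² ≠ 1 and w₁·w₂ = −q·(q² − 1)⁻², then q²·X₁(X₂(a)) − X₂(X₁(a)) = (q − q⁻¹)⁻¹·(K(K(a)) − a) for all a ∈ L. -/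
/-!
Both operators are `w (1 - σ)`, and `1 - σ` satisfies `(1 - σ)(w b) = (1 - σ)(w) b + σ(w) (1 - σ)(b)`.
Expanding `X₁ X₂` and `X₂ X₁` this way, the eigenvalues `t = q²` and `t⁻¹` of `σ` on `w₁`, `w₂`
make the `σ(1 - σ)` terms combine with the `(1 - σ)` terms into `(t - 1) w₁ w₂ (1 - σ²)`.
The second statement is the scalar identity `(q² - 1) · (-q (q² - 1)⁻²) = -(q - q⁻¹)⁻¹`.
-/

section WeightedDifference

variable {L : Type*} [CommRing L]

def weightedDifference (σ : L →+* L) (w a : L) : L := w * (a - σ a)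

theorem weightedDifference_commutator (σ : L →+* L) {w₁ w₂ t s : L} (hts : t * s = 1)
    (h₁ : σ w₁ = t * w₁) (h₂ : σ w₂ = s * w₂) (a : L) :
    t * weightedDifference σ w₁ (weightedDifference σ w₂ a)
        - weightedDifference σ w₂ (weightedDifference σ w₁ a)
      = (t - 1) * (w₁ * w₂ * (a - σ (σ a))) := by
  simp only [weightedDifference, map_mul, map_sub, h₁, h₂]
  linear_combination (-(w₁ * w₂ * (σ a - σ (σ a)))) * hts

end WeightedDifference

theorem sq_sub_one_mul_neg_div_sq {k : Type*} [Field k] {q : k} (hq : q ≠ 0) (hq1 : q ^ 2 ≠ 1) :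
    (q ^ 2 - 1) * (-q * ((q ^ 2 - 1) ^ 2)⁻¹) = -(q - q⁻¹)⁻¹ := by
  have hq1' : q ^ 2 - 1 ≠ 0 := sub_ne_zero.mpr hq1
  rw [show q - q⁻¹ = (q ^ 2 - 1) / q by field_simp]
  field_simp

/-- Example 3.7 computation for `u_q(sl₂)`:
`q²X₁X₂ − X₂X₁ = (q²−1)w₁w₂(1 − K²)`, and with `w₁w₂ = −q(q²−1)⁻²` this equals
`(q − q⁻¹)⁻¹(K² − 1)`. -/
theorem stmt_11 (k L : Type*) [Field k] [Field L] [Algebra k L]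
    (K : L ≃ₐ[k] L) (q : k) (hq : q ≠ 0)
    (w₁ w₂ : L)
    (h₁ : K w₁ = algebraMap k L (q ^ 2) * w₁)
    (h₂ : K w₂ = algebraMap k L ((q ^ 2)⁻¹) * w₂)
    (X₁ X₂ : L → L)
    (hX₁ : ∀ a : L, X₁ a = w₁ * (a - K a))
    (hX₂ : ∀ a : L, X₂ a = w₂ * (a - K a)) :
    (∀ a : L,
      algebraMap k L (q ^ 2) * X₁ (X₂ a) - X₂ (X₁ a) =
        algebraMap k L (q ^ 2 - 1) * (w₁ * w₂ * (a - K (K a)))) ∧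
    (q ^ 2 ≠ 1 → w₁ * w₂ = algebraMap k L (-q * ((q ^ 2 - 1) ^ 2)⁻¹) →
      ∀ a : L,
        algebraMap k L (q ^ 2) * X₁ (X₂ a) - X₂ (X₁ a) =
          algebraMap k L ((q - q⁻¹)⁻¹) * (K (K a) - a)) := by
  obtain rfl : X₁ = weightedDifference (K : L →+* L) w₁ := funext hX₁
  obtain rfl : X₂ = weightedDifference (K : L →+* L) w₂ := funext hX₂
  have hts : algebraMap k L (q ^ 2) * algebraMap k L ((q ^ 2)⁻¹) = 1 := by
    rw [← map_mul, mul_inv_cancel₀ (pow_ne_zero 2 hq), map_one]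
  have commutator := weightedDifference_commutator (K : L →+* L) hts h₁ h₂
  simp only [RingHom.coe_coe, ← map_one (algebraMap k L), ← map_sub] at commutator
  refine ⟨commutator, fun hq1 hw a => ?_⟩
  rw [commutator, hw, ← mul_assoc, ← map_mul, sq_sub_one_mul_neg_div_sq hq hq1, map_neg]
  ring
end

section
/- Let k be a field, L a field extension of k, and g₁, g₂ commuting k-algebra automorphisms of L. Let q₁₁, q₁₂, q₂₁ ∈ kˣ with q₁₁·q₂₁·q₁₂ = 1, and let w₁, w₂ ∈ L satisfy g₁(w₁) = q₁₁·w₁, g₁(w₂) = q₁₂·w₂, and g₂(w₁) = q₂₁·w₁. Define X_i : L → L by X_i(a) = w_i·(a − g_i(a)). Then, as k-linear operators on L, q₂₁·X₁²X₂ − (q₁₂q₂₁ + 1)·X₁X₂X₁ + q₁₂·X₂X₁² equals the map a ↦ (q₁₂ − 1)(q₂₁ − 1)·w₁²w₂·(g₁(g₁(g₂(a))) − a). -/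
/-- Proposition 6.2 computation (type A₂ liftings): if `q₁₁q₂₁q₁₂ = 1`, then
`q₂₁X₁²X₂ − (q₁₂q₂₁+1)X₁X₂X₁ + q₁₂X₂X₁²` acts by
`(q₁₂−1)(q₂₁−1)·w₁²w₂·(g₁²g₂ − 1)`. -/
theorem stmt_19 (k L : Type*) [Field k] [Field L] [Algebra k L]
    (g₁ g₂ : L ≃ₐ[k] L) (hcomm : ∀ a : L, g₁ (g₂ a) = g₂ (g₁ a))
    (q₁₁ q₁₂ q₂₁ : k) (hq : q₁₁ * q₂₁ * q₁₂ = 1)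
    (w₁ w₂ : L)
    (h₁₁ : g₁ w₁ = algebraMap k L q₁₁ * w₁)
    (h₁₂ : g₁ w₂ = algebraMap k L q₁₂ * w₂)
    (h₂₁ : g₂ w₁ = algebraMap k L q₂₁ * w₁)
    (X₁ X₂ : L → L)
    (hX₁ : ∀ a : L, X₁ a = w₁ * (a - g₁ a))
    (hX₂ : ∀ a : L, X₂ a = w₂ * (a - g₂ a)) :
    ∀ a : L,
      algebraMap k L q₂₁ * X₁ (X₁ (X₂ a))
          - algebraMap k L (q₁₂ * q₂₁ + 1) * X₁ (X₂ (X₁ a))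
          + algebraMap k L q₁₂ * X₂ (X₁ (X₁ a)) =
      algebraMap k L ((q₁₂ - 1) * (q₂₁ - 1)) * (w₁ ^ 2 * w₂)
        * (g₁ (g₁ (g₂ a)) - a) := by
  intro a
  have hq' : (algebraMap k L q₁₁) * algebraMap k L q₂₁ * algebraMap k L q₁₂ = 1 := by
    rw [← map_mul, ← map_mul, hq, map_one]
  simp only [hX₁, hX₂, map_mul, map_sub, map_add, map_one, h₁₁, h₁₂, h₂₁,
    AlgEquiv.commutes, hcomm]
  ring_nf
  linear_combination (w₁^2 * w₂ * (a - g₁ a + algebraMap k L q₁₂ * g₁ a - algebraMap k L q₁₂ * g₂ (g₁ (g₁ a)) + algebraMap k L q₂₁ * g₂ (g₁ a) - algebraMap k L q₂₁ * g₂ (g₁ (g₁ a)) - algebraMap k L q₂₁ * algebraMap k L q₁₂ * g₂ (g₁ a) + algebraMap k L q₂₁ * algebraMap k L q₁₂ * g₂ (g₁ (g₁ a)) - a + g₂ (g₁ (g₁ a)))) * hq'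
end
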